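/- arXiv:1810.10454 — 3 statements merged into one kernel-verified Lean document; each statement's English description precedes it below -/
import Mathlib

section
/- Let T be an invertible ergodic measure-preserving transformation of a probability space (Ω, B, P), G a countable group, and f: Ω → G measurable. Define the cocycle F(n,ω) = f(ω)·f(Tω)···f(T^{n-1}ω) for n ≥ 1, and the range R_ω(n) = {F(k,ω) : 1 ≤ k ≤ n}. Then for P-almost every ω, |R_ω(n)|/n converges to P({ω' : F(n,ω') ≠ id_G for all n ≥ 1}). -/
/-!
Count the range by last visits: by the cocycle identity `F(k + i, ω) = F(k, ω) F(i, T^k ω)`, the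
time `k ≤ n` is the last visit to `F(k, ω)` before `n` iff the walk restarted at `T^k ω` does not
return to the identity within the remaining `n - k` steps. Hence `|R_ω(n)|` is at least the number
of `k ≤ n` with `T^k ω` in the escape set `A = {F(i, ·) ≠ 1 for all i ≥ 1}`, and at most `m` plus
the number of `k ≤ n` with `T^k ω ∈ A_m = {F(i, ·) ≠ 1 for 1 ≤ i ≤ m}`. By the pointwise ergodic
theorem these counts divided by `n` tend to `P(A)` and `P(A_m)`, and `P(A_m) ↓ P(A)`.

The pointwise ergodic theorem for `[0, 1]`-valued functions is proved by the stopping-time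
argument of Katznelson and Weiss: the limsup of the Birkhoff averages is invariant, so a.e. equal
to a constant `c`, and chaining the times at which the averages exceed `β < c` gives `β ≤ ∫ g`.
-/

open MeasureTheory Filter Finset Topology

theorem tendsto_of_tendsto_of_le_of_forall_le_of_tendsto {ι κ α : Type*} [TopologicalSpace α]
    [LinearOrder α] [OrderTopology α] {l : Filter ι} {l' : Filter κ} [l'.NeBot]
    {x a : ι → α} {b : κ → ι → α} {L : α} {Lb : κ → α}
    (ha : Tendsto a l (𝓝 L)) (hb : ∀ m, Tendsto (b m) l (𝓝 (Lb m))) (hLb : Tendsto Lb l' (𝓝 L))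
    (hax : ∀ i, a i ≤ x i) (hxb : ∀ m i, x i ≤ b m i) : Tendsto x l (𝓝 L) := by
  refine tendsto_order.2 ⟨fun c hc => (ha.eventually (lt_mem_nhds hc)).mono
    fun i hi => hi.trans_le (hax i), fun d hd => ?_⟩
  obtain ⟨m, hm⟩ := (hLb.eventually (gt_mem_nhds hd)).exists
  exact ((hb m).eventually (gt_mem_nhds hm)).mono fun i hi => (hxb m i).trans_lt hi

theorem limsup_le_limsup_of_tendsto_sub {ι : Type*} {l : Filter ι} [l.NeBot] {u v : ι → ℝ}
    (h : Tendsto (fun i => u i - v i) l (𝓝 0)) (hv : IsBoundedUnder (· ≤ ·) l v)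
    (hv' : IsBoundedUnder (· ≥ ·) l v) : limsup u l ≤ limsup v l :=
  have h : Tendsto (u - v) l (𝓝 0) := h
  calc limsup u l = limsup (v + (u - v)) l := by rw [add_sub_cancel]
    _ ≤ limsup v l + limsup (u - v) l :=
      limsup_add_le hv' hv h.isBoundedUnder_ge.isCoboundedUnder_le h.isBoundedUnder_le
    _ = limsup v l := by rw [h.limsup_eq, add_zero]

theorem Finset.card_image_eq_card_filter_forall_lt_ne {ι α : Type*} [LinearOrder ι]
    [DecidableEq α] (s : Finset ι) (u : ι → α) :
    #(s.image u) = #{k ∈ s | ∀ j ∈ s, k < j → u j ≠ u k} := by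
  set L := {k ∈ s | ∀ j ∈ s, k < j → u j ≠ u k}
  have hL : L.image u = s.image u := by
    refine (image_subset_image (filter_subset _ _)).antisymm fun y hy => ?_
    obtain ⟨k, hk, rfl⟩ := mem_image.1 hy
    set S := {j ∈ s | u j = u k}
    have hS : S.Nonempty := ⟨k, mem_filter.2 ⟨hk, rfl⟩⟩
    obtain ⟨hmax_mem, hmax_eq⟩ := mem_filter.1 (S.max'_mem hS)
    refine mem_image.2 ⟨S.max' hS, mem_filter.2 ⟨hmax_mem, fun j hj hlt hj_eq => ?_⟩, hmax_eq⟩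
    exact hlt.not_ge (S.le_max' j (mem_filter.2 ⟨hj, hj_eq.trans hmax_eq⟩))
  rw [← hL, card_image_of_injOn]
  intro a ha b hb hab
  simp only [coe_filter, Set.mem_ofPred_eq, L] at ha hb
  rcases lt_trichotomy a b with h | h | h
  · exact absurd hab.symm (ha.2 b hb.1 h)
  · exact h
  · exact absurd hab (hb.2 a ha.1 h)

section BirkhoffAverage

variable {α : Type*} {T : α → α} {g : α → ℝ}

theorem birkhoffAverage_eq_div (n : ℕ) (x : α) :
    birkhoffAverage ℝ T g n x = birkhoffSum T g n x / n := by
  rw [birkhoffAverage, smul_eq_mul, inv_mul_eq_div]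

open scoped Classical in
theorem birkhoffSum_indicator_one (s : Set α) (n : ℕ) (x : α) :
    birkhoffSum T (s.indicator 1) n x = (#{k ∈ range n | T^[k] x ∈ s} : ℝ) := by
  simp [birkhoffSum, Set.indicator_apply]

theorem birkhoffAverage_mem_Icc (hg : ∀ x, g x ∈ Set.Icc (0 : ℝ) 1) (n : ℕ) (x : α) :
    birkhoffAverage ℝ T g n x ∈ Set.Icc (0 : ℝ) 1 := by
  have h0 : 0 ≤ birkhoffSum T g n x := sum_nonneg fun k _ => (hg _).1
  have h1 : birkhoffSum T g n x ≤ n := by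
    simpa [birkhoffSum] using sum_le_sum fun k (_ : k ∈ range n) => (hg (T^[k] x)).2
  rw [birkhoffAverage_eq_div]
  exact ⟨by positivity, div_le_one_of_le₀ h1 n.cast_nonneg⟩

theorem isBoundedUnder_le_birkhoffAverage (hg : ∀ x, g x ∈ Set.Icc (0 : ℝ) 1) (x : α) :
    IsBoundedUnder (· ≤ ·) atTop fun n => birkhoffAverage ℝ T g n x :=
  isBoundedUnder_of ⟨1, fun n => (birkhoffAverage_mem_Icc hg n x).2⟩

theorem isBoundedUnder_ge_birkhoffAverage (hg : ∀ x, g x ∈ Set.Icc (0 : ℝ) 1) (x : α) :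
    IsBoundedUnder (· ≥ ·) atTop fun n => birkhoffAverage ℝ T g n x :=
  isBoundedUnder_of ⟨0, fun n => (birkhoffAverage_mem_Icc hg n x).1⟩

theorem limsup_birkhoffAverage_apply (hg : ∀ x, g x ∈ Set.Icc (0 : ℝ) 1) (x : α) :
    limsup (fun n => birkhoffAverage ℝ T g n (T x)) atTop =
      limsup (fun n => birkhoffAverage ℝ T g n x) atTop := by
  have hbdd : Bornology.IsBounded (Set.range g) :=
    (Metric.isBounded_Icc (0 : ℝ) 1).subset (Set.range_subset_iff.2 hg)
  have h := tendsto_birkhoffAverage_apply_sub_birkhoffAverage' ℝ hbdd T x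
  refine le_antisymm (limsup_le_limsup_of_tendsto_sub h (isBoundedUnder_le_birkhoffAverage hg x)
    (isBoundedUnder_ge_birkhoffAverage hg x)) (limsup_le_limsup_of_tendsto_sub ?_
    (isBoundedUnder_le_birkhoffAverage hg (T x)) (isBoundedUnder_ge_birkhoffAverage hg (T x)))
  simpa using h.neg

/-- Stopping-time estimate of Katznelson and Weiss: chain the times given by `hstop`; only the
last stretch, of length less than `N`, is lost. -/
theorem sub_mul_le_birkhoffSum {h : α → ℝ} {β : ℝ} {N : ℕ} (h0 : ∀ x, 0 ≤ h x) (hβ : 0 ≤ β)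
    (hstop : ∀ x, ∃ m ∈ Icc 1 N, m * β ≤ birkhoffSum T h m x) (M : ℕ) (x : α) :
    (M - N : ℝ) * β ≤ birkhoffSum T h M x := by
  induction M using Nat.strong_induction_on generalizing x with
  | _ M ih =>
  have hsum_nonneg : 0 ≤ birkhoffSum T h M x := sum_nonneg fun k _ => h0 _
  by_cases hMN : M ≤ N
  · have : (M : ℝ) ≤ N := by exact_mod_cast hMN
    nlinarith
  obtain ⟨m, hm, hmβ⟩ := hstop x
  obtain ⟨hm1, hmN⟩ := mem_Icc.1 hm
  have hrest := ih (M - m) (by omega) (T^[m] x)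
  rw [← Nat.add_sub_of_le (hmN.trans (not_le.1 hMN).le), birkhoffSum_add]
  push_cast [Nat.cast_sub (hmN.trans (not_le.1 hMN).le)] at hrest ⊢
  nlinarith

theorem exists_mul_le_birkhoffSum_add_indicator (hg : ∀ x, 0 ≤ g x) {β : ℝ} (hβ : 0 ≤ β) {N : ℕ}
    (hN : 1 ≤ N) (x : α) :
    ∃ m ∈ Icc 1 N, m * β ≤ birkhoffSum T (fun y => g y +
      {y | ∀ n ∈ Icc 1 N, birkhoffAverage ℝ T g n y ≤ β}.indicator (fun _ => β) y) m x := by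
  set D := {y | ∀ n ∈ Icc 1 N, birkhoffAverage ℝ T g n y ≤ β}
  by_cases hx : x ∈ D
  · refine ⟨1, mem_Icc.2 ⟨le_rfl, hN⟩, ?_⟩
    simpa [birkhoffSum_one, Set.indicator_of_mem hx] using hg x
  simp only [D, Set.mem_ofPred_eq, not_forall, not_le] at hx
  obtain ⟨n, hn, hnβ⟩ := hx
  have hn0 : (0 : ℝ) < n := by exact_mod_cast (mem_Icc.1 hn).1
  rw [birkhoffAverage_eq_div, lt_div_iff₀ hn0, mul_comm] at hnβ
  exact ⟨n, hn, hnβ.le.trans (sum_le_sum fun k _ =>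
    le_add_of_nonneg_right (Set.indicator_nonneg (fun _ _ => hβ) _))⟩

end BirkhoffAverage

section ErgodicTheorem

variable {α : Type*} [MeasurableSpace α] {μ : Measure α} {T : α → α} {g : α → ℝ}

theorem measurable_birkhoffAverage (hT : Measurable T) (hg : Measurable g) (n : ℕ) :
    Measurable (birkhoffAverage ℝ T g n) :=
  (show Measurable (birkhoffSum T g n) from measurable_sum _ fun k _ => hg.comp (hT.iterate k)
    ).const_smul ((n : ℝ)⁻¹)

theorem measurableSet_setOf_forall_birkhoffAverage_le (hT : Measurable T) (hg : Measurable g)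
    (s : Finset ℕ) (β : ℝ) : MeasurableSet {x | ∀ n ∈ s, birkhoffAverage ℝ T g n x ≤ β} := by
  simp only [Set.ofPred_forall]
  exact .iInter fun n => .iInter fun _ =>
    measurableSet_le (measurable_birkhoffAverage hT hg n) measurable_const

theorem integrable_of_forall_mem_Icc [IsFiniteMeasure μ] (hg : Measurable g)
    (hg01 : ∀ x, g x ∈ Set.Icc (0 : ℝ) 1) : Integrable g μ :=
  .of_bound hg.aestronglyMeasurable 1 (.of_forall fun x => by
    simpa [abs_of_nonneg (hg01 x).1] using (hg01 x).2)

theorem integrable_birkhoffSum (hT : MeasurePreserving T μ μ) (hg : Integrable g μ) (n : ℕ) :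
    Integrable (birkhoffSum T g n) μ :=
  integrable_finsetSum _ fun k _ => (hT.iterate k).integrable_comp_of_integrable hg

theorem integral_birkhoffSum (hT : MeasurePreserving T μ μ) (hg : Integrable g μ) (n : ℕ) :
    ∫ x, birkhoffSum T g n x ∂μ = n * ∫ x, g x ∂μ := by
  have hcomp : ∀ k, ∫ x, g (T^[k] x) ∂μ = ∫ x, g x ∂μ := fun k => by
    rw [← integral_map (hT.iterate k).measurable.aemeasurable
      (by rw [(hT.iterate k).map_eq]; exact hg.aestronglyMeasurable), (hT.iterate k).map_eq]
  refine (integral_finsetSum _ fun k _ => (hT.iterate k).integrable_comp_of_integrable hg).trans ?_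
  simp [hcomp]

theorem le_integral_of_forall_exists_le_birkhoffSum [IsProbabilityMeasure μ]
    (hT : MeasurePreserving T μ μ) (hint : Integrable g μ) (h0 : ∀ x, 0 ≤ g x) {β : ℝ} {N : ℕ}
    (hβ : 0 ≤ β) (hstop : ∀ x, ∃ m ∈ Icc 1 N, m * β ≤ birkhoffSum T g m x) :
    β ≤ ∫ x, g x ∂μ := by
  have hM : ∀ M : ℕ, (M - N : ℝ) * β ≤ M * ∫ x, g x ∂μ := fun M => by
    rw [← integral_birkhoffSum hT hint]
    simpa using integral_mono (integrable_const _) (integrable_birkhoffSum hT hint M)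
      (sub_mul_le_birkhoffSum h0 hβ hstop M)
  have hlim : Tendsto (fun M : ℕ => (1 - N / M : ℝ) * β) atTop (𝓝 ((1 - 0) * β)) :=
    ((tendsto_const_div_atTop_nhds_zero_nat (N : ℝ)).const_sub 1).mul_const β
  refine le_of_tendsto (by simpa using hlim) ((eventually_gt_atTop 0).mono fun M hM0 => ?_)
  have hM0' : (0 : ℝ) < M := by exact_mod_cast hM0
  rw [one_sub_div hM0'.ne', div_mul_eq_mul_div, div_le_iff₀ hM0', mul_comm (∫ x, g x ∂μ)]
  exact hM M

theorem tendsto_measureReal_setOf_forall_birkhoffAverage_le [IsFiniteMeasure μ]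
    (hT : Measurable T) (hg : Measurable g) (hg01 : ∀ x, g x ∈ Set.Icc (0 : ℝ) 1) {β : ℝ}
    (hβ : ∀ᵐ x ∂μ, β < limsup (fun n => birkhoffAverage ℝ T g n x) atTop) :
    Tendsto (fun N => μ.real {x | ∀ n ∈ Icc 1 N, birkhoffAverage ℝ T g n x ≤ β}) atTop (𝓝 0) := by
  set D : ℕ → Set α := fun N => {x | ∀ n ∈ Icc 1 N, birkhoffAverage ℝ T g n x ≤ β}
  have hnull : μ (⋂ N, D N) = 0 := by
    refine measure_mono_null (fun x hx => ?_) (ae_iff.1 hβ)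
    have hx : ∀ n, 1 ≤ n → birkhoffAverage ℝ T g n x ≤ β := fun n hn =>
      Set.mem_iInter.1 hx n n (mem_Icc.2 ⟨hn, le_rfl⟩)
    exact not_lt.2 (limsup_le_of_le (isBoundedUnder_ge_birkhoffAverage hg01 x).isCoboundedUnder_le
      (eventually_atTop.2 ⟨1, hx⟩))
  have h := tendsto_measure_iInter_atTop
    (fun N => (measurableSet_setOf_forall_birkhoffAverage_le hT hg _ β).nullMeasurableSet)
    (fun N M hNM x hx n hn => hx n (Icc_subset_Icc_right hNM hn)) ⟨0, measure_ne_top μ (D 0)⟩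
  rw [hnull] at h
  exact (ENNReal.tendsto_toReal ENNReal.zero_ne_top).comp h

theorem le_integral_of_ae_limsup_birkhoffAverage_eq [IsProbabilityMeasure μ]
    (hT : MeasurePreserving T μ μ) (hg : Measurable g) (hg01 : ∀ x, g x ∈ Set.Icc (0 : ℝ) 1)
    {c : ℝ} (hc : ∀ᵐ x ∂μ, limsup (fun n => birkhoffAverage ℝ T g n x) atTop = c) :
    c ≤ ∫ x, g x ∂μ := by
  have hgi : Integrable g μ := integrable_of_forall_mem_Icc hg hg01
  refine le_of_forall_lt_imp_le_of_dense fun β hβc => ?_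
  rcases le_or_gt β 0 with hβ0 | hβ0
  · exact hβ0.trans (integral_nonneg fun x => (hg01 x).1)
  refine le_of_forall_pos_le_add fun ε hε => ?_
  set D : ℕ → Set α := fun N => {x | ∀ n ∈ Icc 1 N, birkhoffAverage ℝ T g n x ≤ β}
  have hβ : ∀ᵐ x ∂μ, β < limsup (fun n => birkhoffAverage ℝ T g n x) atTop :=
    hc.mono fun x hx => hx.symm ▸ hβc
  have hD := (tendsto_measureReal_setOf_forall_birkhoffAverage_le hT.measurable hg hg01
    hβ).const_mul β
  rw [mul_zero] at hD
  obtain ⟨N, hN1, hDN⟩ : ∃ N, 1 ≤ N ∧ β * μ.real (D N) < ε :=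
    ((eventually_ge_atTop 1).and (hD.eventually (gt_mem_nhds hε))).exists
  have hDm : MeasurableSet (D N) :=
    measurableSet_setOf_forall_birkhoffAverage_le hT.measurable hg _ β
  have hstop := exists_mul_le_birkhoffSum_add_indicator (T := T) (fun x => (hg01 x).1) hβ0.le hN1
  have hind : Integrable ((D N).indicator fun _ => β) μ := (integrable_const β).indicator hDm
  have hβh := le_integral_of_forall_exists_le_birkhoffSum hT (hgi.add hind)
    (fun x => add_nonneg (hg01 x).1 (Set.indicator_nonneg (fun _ _ => hβ0.le) x)) hβ0.le hstop
  rw [integral_add' hgi hind, integral_indicator_const β hDm, smul_eq_mul] at hβh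
  linarith

theorem ae_limsup_birkhoffAverage_le_integral [IsProbabilityMeasure μ] (hT : Ergodic T μ)
    (hg : Measurable g) (hg01 : ∀ x, g x ∈ Set.Icc (0 : ℝ) 1) :
    ∀ᵐ x ∂μ, limsup (fun n => birkhoffAverage ℝ T g n x) atTop ≤ ∫ x, g x ∂μ := by
  obtain ⟨c, hc⟩ := hT.ae_eq_const_of_ae_eq_comp₀
    (Measurable.limsup fun n => measurable_birkhoffAverage hT.measurable hg n).nullMeasurable
    (.of_forall fun x => limsup_birkhoffAverage_apply hg01 x)
  have hcg := le_integral_of_ae_limsup_birkhoffAverage_eq hT.toMeasurePreserving hg hg01 hc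
  filter_upwards [hc] with x hx
  exact hx.trans_le hcg

theorem tendsto_birkhoffAverage_of_mem_Icc [IsProbabilityMeasure μ] (hT : Ergodic T μ)
    (hg : Measurable g) (hg01 : ∀ x, g x ∈ Set.Icc (0 : ℝ) 1) :
    ∀ᵐ x ∂μ, Tendsto (fun n => birkhoffAverage ℝ T g n x) atTop (𝓝 (∫ x, g x ∂μ)) := by
  have hg01' : ∀ x, (1 - g) x ∈ Set.Icc (0 : ℝ) 1 := fun x => by
    simpa [and_comm] using hg01 x
  have hint : ∫ x, (1 - g) x ∂μ = 1 - ∫ x, g x ∂μ := by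
    simp only [Pi.sub_apply, Pi.one_apply]
    rw [integral_sub (integrable_const 1) (integrable_of_forall_mem_Icc hg hg01)]
    simp
  -- The limsup bound for `1 - g` is a liminf bound for `g`.
  have hliminf : ∀ x, limsup (fun n => birkhoffAverage ℝ T (1 - g) n x) atTop =
      1 - liminf (fun n => birkhoffAverage ℝ T g n x) atTop := fun x => by
    rw [← limsup_const_sub _ _ _ (isBoundedUnder_le_birkhoffAverage hg01 x).isCoboundedUnder_ge
      (isBoundedUnder_ge_birkhoffAverage hg01 x)]
    refine limsup_congr ((eventually_ne_atTop 0).mono fun n hn => ?_)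
    rw [birkhoffAverage_sub, Pi.sub_apply, Pi.sub_apply,
      birkhoffAverage_of_comp_eq ℝ (f := T) (g := 1) rfl (Nat.cast_ne_zero.2 hn)]
    rfl
  filter_upwards [ae_limsup_birkhoffAverage_le_integral hT hg hg01,
    ae_limsup_birkhoffAverage_le_integral hT (measurable_one.sub hg) hg01'] with x hsup hinf
  rw [hliminf, hint] at hinf
  exact tendsto_of_le_liminf_of_limsup_le (by linarith) hsup
    (isBoundedUnder_le_birkhoffAverage hg01 x) (isBoundedUnder_ge_birkhoffAverage hg01 x)

theorem tendsto_birkhoffAverage_indicator_one [IsProbabilityMeasure μ] (hT : Ergodic T μ)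
    {s : Set α} (hs : MeasurableSet s) :
    ∀ᵐ x ∂μ, Tendsto (fun n => birkhoffAverage ℝ T (s.indicator 1) n x) atTop (𝓝 (μ.real s)) := by
  rw [← integral_indicator_one hs]
  refine tendsto_birkhoffAverage_of_mem_Icc hT (measurable_const.indicator hs) fun x => ?_
  by_cases hx : x ∈ s <;> simp [hx]

end ErgodicTheorem

section Cocycle

variable {Ω G : Type*} [Group G]

def cocycle (T : Ω → Ω) (f : Ω → G) (n : ℕ) (ω : Ω) : G :=
  ((List.range n).map fun i => f (T^[i] ω)).prod

def cocycleRange [DecidableEq G] (T : Ω → Ω) (f : Ω → G) (ω : Ω) (n : ℕ) : Finset G :=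
  (Icc 1 n).image fun k => cocycle T f k ω

def noReturnUpTo (T : Ω → Ω) (f : Ω → G) (m : ℕ) : Set Ω :=
  {ω | ∀ i ∈ Icc 1 m, cocycle T f i ω ≠ 1}

def noReturn (T : Ω → Ω) (f : Ω → G) : Set Ω :=
  {ω | ∀ n, 1 ≤ n → cocycle T f n ω ≠ 1}

variable {T : Ω → Ω} {f : Ω → G}

theorem cocycle_one (ω : Ω) : cocycle T f 1 ω = f ω := by
  simp [cocycle]

theorem cocycle_add (m n : ℕ) (ω : Ω) :
    cocycle T f (m + n) ω = cocycle T f m ω * cocycle T f n (T^[m] ω) := by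
  rw [cocycle, List.range_add, List.map_append, List.prod_append, List.map_map]
  congr 3
  funext i
  rw [Function.comp_apply, add_comm, Function.iterate_add_apply]

theorem measurable_cocycle [MeasurableSpace Ω] [MeasurableSpace G] [MeasurableMul₂ G]
    (hT : Measurable T) (hf : Measurable f) (n : ℕ) : Measurable (cocycle T f n) := by
  induction n with
  | zero => exact measurable_const
  | succ n ih =>
    have h : cocycle T f (n + 1) = fun ω => cocycle T f n ω * f (T^[n] ω) :=
      funext fun ω => by rw [cocycle_add, cocycle_one]
    exact h ▸ ih.mul (hf.comp (hT.iterate n))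

theorem noReturnUpTo_antitone : Antitone (noReturnUpTo T f) :=
  fun _ _ hmm' _ hω i hi => hω i (Icc_subset_Icc_right hmm' hi)

theorem noReturn_subset_noReturnUpTo (m : ℕ) : noReturn T f ⊆ noReturnUpTo T f m :=
  fun _ hω i hi => hω i (mem_Icc.1 hi).1

theorem iInter_noReturnUpTo : ⋂ m, noReturnUpTo T f m = noReturn T f :=
  Set.Subset.antisymm (fun _ hω n hn => Set.mem_iInter.1 hω n n (mem_Icc.2 ⟨hn, le_rfl⟩))
    (Set.subset_iInter noReturn_subset_noReturnUpTo)

section Measurable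

variable [MeasurableSpace Ω] [MeasurableSpace G] [MeasurableMul₂ G] [MeasurableSingletonClass G]

theorem measurableSet_noReturnUpTo (hT : Measurable T) (hf : Measurable f) (m : ℕ) :
    MeasurableSet (noReturnUpTo T f m) := by
  simp only [noReturnUpTo, Set.ofPred_forall]
  exact .iInter fun i => .iInter fun _ =>
    (measurableSet_singleton 1).compl.preimage (measurable_cocycle hT hf i)

theorem measurableSet_noReturn (hT : Measurable T) (hf : Measurable f) :
    MeasurableSet (noReturn T f) :=
  iInter_noReturnUpTo (T := T) (f := f) ▸ .iInter (measurableSet_noReturnUpTo hT hf)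

theorem tendsto_measureReal_noReturnUpTo {μ : Measure Ω} [IsFiniteMeasure μ] (hT : Measurable T)
    (hf : Measurable f) :
    Tendsto (fun m => μ.real (noReturnUpTo T f m)) atTop (𝓝 (μ.real (noReturn T f))) := by
  have h := tendsto_measure_iInter_atTop
    (fun m => (measurableSet_noReturnUpTo hT hf m).nullMeasurableSet) noReturnUpTo_antitone
    ⟨0, measure_ne_top μ _⟩
  rw [iInter_noReturnUpTo] at h
  exact (ENNReal.tendsto_toReal (measure_ne_top μ _)).comp h

end Measurable

variable [DecidableEq G]

open scoped Classical in
/-- Time `k + 1` is the last time `≤ n` at which the walk visits `cocycle T f (k + 1) ω` exactly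
when the walk restarted at `T^[k + 1] ω` does not return to `1` within `n - 1 - k` steps. -/
theorem card_cocycleRange (ω : Ω) (n : ℕ) :
    #(cocycleRange T f ω n) = #{k ∈ range n | T^[k] (T ω) ∈ noReturnUpTo T f (n - 1 - k)} := by
  have hIcc : Icc 1 n = (range n).image (· + 1) := by
    ext k
    simp only [mem_image, mem_range, mem_Icc]
    exact ⟨fun h => ⟨k - 1, by omega, by omega⟩, fun ⟨a, ha, h⟩ => by omega⟩
  rw [cocycleRange, hIcc, image_image, card_image_eq_card_filter_forall_lt_ne]
  refine congrArg card (filter_congr fun k hk => ?_)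
  simp only [noReturnUpTo, Set.mem_ofPred_eq, mem_range, mem_Icc, Function.comp_apply,
    ← Function.iterate_succ_apply]
  refine ⟨fun h i hi => ?_, fun h j hj hkj => ?_⟩
  · have := h (k + i) (by omega) (by omega)
    rwa [add_right_comm, cocycle_add, Ne, mul_eq_left] at this
  · obtain ⟨i, rfl⟩ := Nat.exists_eq_add_of_lt hkj
    rw [show k + i + 1 + 1 = k + 1 + (i + 1) by omega, cocycle_add, Ne, mul_eq_left]
    exact h (i + 1) ⟨by omega, by omega⟩

theorem birkhoffSum_indicator_noReturn_le_card_cocycleRange (ω : Ω) (n : ℕ) :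
    birkhoffSum T ((noReturn T f).indicator (1 : Ω → ℝ)) n (T ω) ≤ #(cocycleRange T f ω n) := by
  classical
  rw [birkhoffSum_indicator_one, card_cocycleRange, Nat.cast_le]
  exact card_le_card (monotone_filter_right _ fun k _ h => noReturn_subset_noReturnUpTo _ h)

theorem card_cocycleRange_le_birkhoffSum_indicator_noReturnUpTo_add (ω : Ω) (n m : ℕ) :
    #(cocycleRange T f ω n) ≤
      birkhoffSum T ((noReturnUpTo T f m).indicator (1 : Ω → ℝ)) n (T ω) + m := by
  classical
  rw [birkhoffSum_indicator_one, card_cocycleRange]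
  have hsub : {k ∈ range n | T^[k] (T ω) ∈ noReturnUpTo T f (n - 1 - k)} ⊆
      {k ∈ range n | T^[k] (T ω) ∈ noReturnUpTo T f m} ∪ Ico (n - m) n := by
    intro k hk
    obtain ⟨hkn, hkω⟩ := mem_filter.1 hk
    rw [mem_union, mem_filter, mem_Ico]
    by_cases hkm : k < n - m
    · exact .inl ⟨hkn, noReturnUpTo_antitone (by omega) hkω⟩
    · exact .inr ⟨by omega, mem_range.1 hkn⟩
  have := (card_le_card hsub).trans (card_union_le _ _)
  rw [Nat.card_Ico] at this
  exact_mod_cast this.trans (by omega)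

end Cocycle

theorem range_of_cocycle_div_n_tendsto_general
    {Ω : Type*} [MeasurableSpace Ω] (μ : Measure Ω) [IsProbabilityMeasure μ]
    {G : Type*} [Group G] [Countable G] [DecidableEq G]
    [MeasurableSpace G] [MeasurableSingletonClass G]
    (T : Ω → Ω) (hT : Ergodic T μ)
    (f : Ω → G) (hf : Measurable f)
    (F : ℕ → Ω → G)
    (hF : ∀ n ω, F n ω = ((List.range n).map (fun i => f (T^[i] ω))).prod)
    (R : Ω → ℕ → Finset G)
    (hR : ∀ ω n, R ω n = (Finset.Icc 1 n).image (fun k => F k ω)) :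
    ∀ᵐ ω ∂μ, Tendsto (fun n => ((R ω n).card : ℝ) / n) atTop
      (nhds (μ {ω' | ∀ n : ℕ, 1 ≤ n → F n ω' ≠ 1}).toReal) := by
  obtain rfl : F = cocycle T f := funext fun n => funext (hF n)
  obtain rfl : R = cocycleRange T f := funext fun ω => funext (hR ω)
  show ∀ᵐ ω ∂μ, Tendsto _ atTop (𝓝 (μ.real (noReturn T f)))
  have hTm := hT.measurable
  have hA m := tendsto_birkhoffAverage_indicator_one hT (measurableSet_noReturnUpTo hTm hf m)
  have hA_inf := tendsto_birkhoffAverage_indicator_one hT (measurableSet_noReturn hTm hf)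
  filter_upwards [hT.quasiMeasurePreserving.tendsto_ae.eventually ((ae_all_iff.2 hA).and hA_inf)]
    with ω ⟨hAω, hA_infω⟩
  refine tendsto_of_tendsto_of_le_of_forall_le_of_tendsto hA_infω
    (fun m => (hAω m).add (tendsto_const_div_atTop_nhds_zero_nat (m : ℝ)))
    (by simpa only [add_zero] using tendsto_measureReal_noReturnUpTo hTm hf)
    (fun n => ?_) (fun m n => ?_)
  · rw [birkhoffAverage_eq_div]
    exact div_le_div_of_nonneg_right
      (birkhoffSum_indicator_noReturn_le_card_cocycleRange ω n) n.cast_nonneg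
  · rw [birkhoffAverage_eq_div, ← add_div]
    exact div_le_div_of_nonneg_right
      (card_cocycleRange_le_birkhoffSum_indicator_noReturnUpTo_add ω n m) n.cast_nonneg

/-- Spitzer-type range theorem for cocycles over ergodic transformations. -/
theorem range_of_cocycle_div_n_tendsto
    {Ω : Type*} [MeasurableSpace Ω] (μ : Measure Ω) [IsProbabilityMeasure μ]
    {G : Type*} [Group G] [Countable G] [DecidableEq G]
    [MeasurableSpace G] [MeasurableSingletonClass G]
    (T : Ω → Ω) (hTbij : Function.Bijective T) (hT : Ergodic T μ)
    (f : Ω → G) (hf : Measurable f)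
    (F : ℕ → Ω → G)
    (hF : ∀ n ω, F n ω = ((List.range n).map (fun i => f (T^[i] ω))).prod)
    (R : Ω → ℕ → Finset G)
    (hR : ∀ ω n, R ω n = (Finset.Icc 1 n).image (fun k => F k ω)) :
    ∀ᵐ ω ∂μ, Tendsto (fun n => ((R ω n).card : ℝ) / n) atTop
      (nhds (μ {ω' | ∀ n : ℕ, 1 ≤ n → F n ω' ≠ 1}).toReal) :=
  range_of_cocycle_div_n_tendsto_general μ T hT f hf F hF R hR
end

section
/- Let S_n = Σ_{k=0}^{n-1} X_k be a ℤ-valued random walk with i.i.d. increments such that S_n → ∞ almost surely and P(X_1 > 1) > 0. Then P(S_n > 1 for all n ≥ 1) > 0. -/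
open MeasureTheory ProbabilityTheory Filter

/-!
If the first `r` increments all exceed `1`, the walk has climbed to at least `2r` by time `r`.
The shifted walk `(X (r + i))ᵢ` is independent of those increments and has the law of the
original walk, which is bounded below almost surely because it drifts to `+∞`; so for some
`m` it stays above `-m` with positive probability. Taking `r = m + 1`, both events together
have positive probability and force `Sₙ > 1` for every `n ≥ 1`.
-/

lemma one_lt_sum_range_of_prefix_of_shift {x : ℕ → ℤ} {m : ℤ} {r : ℕ}
    (hprefix : ∀ i < r, 1 < x i) (hshift : ∀ n, m < ∑ i ∈ Finset.range n, x (r + i))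
    (hm : -m < 2 * r) {n : ℕ} (hn : 1 ≤ n) : 1 < ∑ i ∈ Finset.range n, x i := by
  have hlow : ∀ k ≤ r, 2 * (k : ℤ) ≤ ∑ i ∈ Finset.range k, x i := fun k hk ↦ by
    simpa [mul_comm] using Finset.card_nsmul_le_sum (Finset.range k) x 2
      fun i hi ↦ hprefix i ((Finset.mem_range.1 hi).trans_le hk)
  rcases le_or_gt n r with hnr | hrn
  · linarith [hlow n hnr, (by exact_mod_cast hn : (1 : ℤ) ≤ n)]
  · obtain ⟨k, rfl⟩ := Nat.exists_eq_add_of_le hrn.le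
    rw [Finset.sum_range_add]
    linarith [hlow r le_rfl, hshift k]

lemma MeasureTheory.exists_measure_ne_zero_forall_neg_lt {Ω : Type*} [MeasurableSpace Ω]
    {μ : Measure Ω} [NeZero μ] {f : ℕ → Ω → ℤ}
    (hf : ∀ᵐ ω ∂μ, Tendsto (f · ω) atTop atTop) :
    ∃ m : ℕ, μ {ω | ∀ n, -(m : ℤ) < f n ω} ≠ 0 := by
  by_contra! h
  have hnot : ∀ᵐ ω ∂μ, ω ∉ ⋃ m : ℕ, {ω | ∀ n, -(m : ℤ) < f n ω} :=
    measure_eq_zero_iff_ae_notMem.1 (measure_iUnion_null h)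
  obtain ⟨ω, hω, hω'⟩ := (hf.and hnot).exists
  obtain ⟨b, hb⟩ := bddBelow_range_of_tendsto_atTop_atTop hω
  refine hω' (Set.mem_iUnion.2 ⟨(1 - b).toNat, fun n ↦ ?_⟩)
  have : b ≤ f n ω := hb ⟨n, rfl⟩
  omega

lemma MeasurableSpace.comap_pi_le_iSup_comap {Ω β ι ι' : Type*} [MeasurableSpace β]
    (Y : ι → Ω → β) (g : ι' → ι) {S : Set ι} (hg : ∀ i, g i ∈ S) :
    MeasurableSpace.comap (fun ω i ↦ Y (g i) ω) MeasurableSpace.pi ≤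
      ⨆ j ∈ S, MeasurableSpace.comap (Y j) ‹_› := by
  simp only [MeasurableSpace.pi, MeasurableSpace.comap_iSup, MeasurableSpace.comap_comp]
  exact iSup_le fun i ↦ le_iSup₂_of_le (g i) (hg i) le_rfl

namespace ProbabilityTheory

variable {Ω β : Type*} [MeasurableSpace Ω] [MeasurableSpace β] {μ : Measure Ω} {X : ℕ → Ω → β}

lemma iIndepFun.map_shift_eq (hmeas : ∀ i, Measurable (X i)) (hindep : iIndepFun X μ)
    (hident : ∀ i j, IdentDistrib (X i) (X j) μ μ) (r : ℕ) :
    μ.map (fun ω i ↦ X (r + i) ω) = μ.map (fun ω i ↦ X i ω) := by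
  rw [(hindep.precomp (add_right_injective r)).map_fun_eq_infinitePi_map fun i ↦ hmeas _,
    hindep.map_fun_eq_infinitePi_map hmeas]
  congr with i : 1
  exact (hident _ _).map_eq

lemma iIndepFun.indepFun_prefix_shift (hmeas : ∀ i, Measurable (X i)) (hindep : iIndepFun X μ)
    (r : ℕ) : IndepFun (fun ω (i : Fin r) ↦ X i ω) (fun ω i ↦ X (r + i) ω) μ := by
  rw [IndepFun_iff_Indep]
  exact indep_of_indep_of_le_right
    (indep_of_indep_of_le_left
      (indep_iSup_of_disjoint (fun i ↦ (hmeas i).comap_le) hindep.iIndep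
        (Set.Iio_disjoint_Ici le_rfl))
      (MeasurableSpace.comap_pi_le_iSup_comap X Fin.val fun i ↦ i.isLt))
    (MeasurableSpace.comap_pi_le_iSup_comap X (r + ·) fun i ↦ Nat.le_add_right r i)

lemma iIndepFun.measure_prefix_mem_pi_eq_pow (hmeas : ∀ i, Measurable (X i))
    (hindep : iIndepFun X μ) (hident : ∀ i j, IdentDistrib (X i) (X j) μ μ) (r j : ℕ)
    {s : Set β} (hs : MeasurableSet s) :
    μ ((fun ω (i : Fin r) ↦ X i ω) ⁻¹' Set.univ.pi fun _ ↦ s) = μ (X j ⁻¹' s) ^ r := by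
  have := hindep.isProbabilityMeasure
  rw [← Measure.map_apply (measurable_pi_iff.2 fun i : Fin r ↦ hmeas i) (.univ_pi fun _ ↦ hs),
    (hindep.precomp (g := (Fin.val : Fin r → ℕ)) Fin.val_injective).map_fun_eq_pi_map
      fun i : Fin r ↦ (hmeas i).aemeasurable, Measure.pi_pi]
  simp_rw [(hident _ j).map_eq, Measure.map_apply (hmeas j) hs]
  simp

end ProbabilityTheory

/-- If the ℤ-valued random walk drifts to +∞ a.s. and `P(X₁ > 1) > 0`,
then with positive probability `Sₙ > 1` for all `n ≥ 1`. -/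
theorem pos_prob_stay_above_one
    {Ω : Type*} [MeasurableSpace Ω] (μ : Measure Ω) [IsProbabilityMeasure μ]
    (X : ℕ → Ω → ℤ) (hmeas : ∀ i, Measurable (X i))
    (hindep : iIndepFun X μ)
    (hident : ∀ i j, IdentDistrib (X i) (X j) μ μ)
    (S : ℕ → Ω → ℤ) (hS : ∀ n ω, S n ω = ∑ i ∈ Finset.range n, X i ω)
    (hdrift : ∀ᵐ ω ∂μ, Tendsto (fun n => S n ω) atTop atTop)
    (hjump : 0 < μ {ω | 1 < X 1 ω}) :
    0 < μ {ω | ∀ n : ℕ, 1 ≤ n → 1 < S n ω} := by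
  obtain ⟨m, hm⟩ := exists_measure_ne_zero_forall_neg_lt hdrift
  set r := m + 1
  set A : Set (Fin r → ℤ) := Set.univ.pi fun _ ↦ Set.Ioi 1
  set T : Set (ℕ → ℤ) := {x | ∀ n, -(m : ℤ) < ∑ i ∈ Finset.range n, x i}
  have hT : MeasurableSet T := by
    simp only [T, Set.ofPred_forall]
    exact .iInter fun n ↦ measurableSet_lt measurable_const (by fun_prop)
  have hprefix : μ ((fun ω (i : Fin r) ↦ X i ω) ⁻¹' A) ≠ 0 := by
    rw [hindep.measure_prefix_mem_pi_eq_pow hmeas hident r 1 measurableSet_Ioi]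
    exact pow_ne_zero _ hjump.ne'
  have hshift : μ ((fun ω i ↦ X (r + i) ω) ⁻¹' T) ≠ 0 := by
    rw [← Measure.map_apply (by fun_prop) hT, hindep.map_shift_eq hmeas hident,
      Measure.map_apply (by fun_prop) hT]
    simpa [T, hS] using hm
  have hindepAT := (hindep.indepFun_prefix_shift hmeas r).measure_inter_preimage_eq_mul A T
    (.univ_pi fun _ ↦ measurableSet_Ioi) hT
  refine (ENNReal.mul_pos hprefix hshift).trans_le (hindepAT ▸ measure_mono ?_)
  rintro ω ⟨hωA, hωT⟩ n hn
  rw [hS]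
  exact one_lt_sum_range_of_prefix_of_shift (x := (X · ω)) (m := -m)
    (fun i hi ↦ hωA ⟨i, hi⟩ trivial) hωT (by omega) hn
end

section
/- Let G be a finitely generated group and p a symmetric probability measure on G defining a transient random walk. Then the Green function G(g) = Σ_{n≥0} p_n(id, g) tends to 0 as g tends to infinity, i.e., for every ε > 0 the set {g ∈ G : G(g) > ε} is finite. -/
/-! Write `μₙ g = pₙ(1, g)` for the `n`-fold convolution power of `p`. By AM–GM and symmetry,
`μ_{a+b} g ≤ Σₖ μₐ(k)² + Σₖ μ_b(k)² = μ_{2a} 1 + μ_{2b} 1`, so `μₙ g` is bounded, uniformly in `g`,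
by return probabilities at times `n - 1, n, n + 1`, a sequence summable by transience. Each `μₙ`
has total mass `1` and therefore tends to `0` along the cofinite filter, and dominated convergence
for the sum over `n` gives `G(g) = Σₙ μₙ g → 0`. -/

open Filter MeasureTheory
open scoped ENNReal Topology

instance Filter.cofinite.isCountablyGenerated {α : Type*} [Countable α] :
    (cofinite : Filter α).IsCountablyGenerated :=
  HasCountableBasis.isCountablyGenerated ⟨hasBasis_cofinite, Set.Countable.ofPred_finite⟩

theorem ENNReal.tendsto_tsum_of_dominated_convergence {α β : Type*}
    {l : Filter α} [l.IsCountablyGenerated] {f : α → β → ℝ≥0∞} {g bound : β → ℝ≥0∞}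
    (h_sum : ∑' b, bound b ≠ ∞) (h_lim : ∀ b, Tendsto (f · b) l (𝓝 (g b)))
    (h_bound : ∀ a b, f a b ≤ bound b) :
    Tendsto (fun a ↦ ∑' b, f a b) l (𝓝 (∑' b, g b)) := by
  let _ : MeasurableSpace β := ⊤
  have := tendsto_lintegral_filter_of_dominated_convergence (μ := Measure.count) bound
    (.of_forall fun _ ↦ measurable_from_top) (.of_forall fun a ↦ ae_of_all _ (h_bound a))
    (by rwa [lintegral_count]) (ae_of_all _ h_lim)
  simpa only [lintegral_count] using this

theorem ENNReal.mul_le_sq_add_sq (x y : ℝ≥0∞) : x * y ≤ x ^ 2 + y ^ 2 := by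
  rcases le_total x y with h | h
  · calc x * y ≤ y ^ 2 := by rw [sq]; gcongr
      _ ≤ x ^ 2 + y ^ 2 := le_add_self
  · calc x * y ≤ x ^ 2 := by rw [sq]; gcongr
      _ ≤ x ^ 2 + y ^ 2 := le_self_add

theorem ENNReal.tsum_pred_add_succ_ne_top {q : ℕ → ℝ≥0∞} (hq : ∑' n, q n ≠ ∞) :
    ∑' n, (q (n - 1) + q n + (q n + q (n + 1))) ≠ ∞ := by
  have hpred : ∑' n, q (n - 1) ≠ ∞ := by
    rw [tsum_eq_zero_add' ENNReal.summable]
    simpa using ⟨ENNReal.ne_top_of_tsum_ne_top hq 0, hq⟩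
  have hsucc : ∑' n, q (n + 1) ≠ ∞ :=
    ne_top_of_le_ne_top hq (ENNReal.tsum_comp_le_tsum_of_injective (add_left_injective 1) q)
  simp only [ENNReal.tsum_add, ne_eq, ENNReal.add_eq_top, not_or]
  exact ⟨⟨hpred, hq⟩, hq, hsucc⟩

namespace RandomWalk

variable {G : Type*} [Group G] [DecidableEq G]

noncomputable def convPow (p : G → ℝ≥0∞) : ℕ → G → ℝ≥0∞
  | 0 => fun g ↦ if g = 1 then 1 else 0
  | n + 1 => fun g ↦ ∑' k, convPow p n k * p (k⁻¹ * g)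

variable {p : G → ℝ≥0∞}

theorem convPow_zero_apply (g : G) : convPow p 0 g = if g = 1 then 1 else 0 := rfl

theorem convPow_succ_apply (n : ℕ) (g : G) :
    convPow p (n + 1) g = ∑' k, convPow p n k * p (k⁻¹ * g) := rfl

theorem convPow_add (m n : ℕ) (g : G) :
    convPow p (m + n) g = ∑' k, convPow p m k * convPow p n (k⁻¹ * g) := by
  induction n generalizing g with
  | zero =>
    rw [tsum_eq_single g fun k hk ↦ by simp [convPow_zero_apply, inv_mul_eq_one, hk]]
    simp [convPow_zero_apply]
  | succ n ih =>
    calc convPow p (m + n + 1) g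
        = ∑' j, ∑' k, convPow p m k * convPow p n (k⁻¹ * j) * p (j⁻¹ * g) := by
          simp only [convPow_succ_apply, ih, ENNReal.tsum_mul_right]
      _ = ∑' k, convPow p m k * ∑' j, convPow p n (k⁻¹ * j) * p (j⁻¹ * g) := by
          rw [ENNReal.tsum_comm]; simp only [mul_assoc, ENNReal.tsum_mul_left]
      _ = ∑' k, convPow p m k * convPow p (n + 1) (k⁻¹ * g) := by
          refine tsum_congr fun k ↦ congrArg _ ?_
          rw [convPow_succ_apply, ← (Equiv.mulLeft k).tsum_eq]
          simp [mul_assoc]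

theorem convPow_one : convPow p 1 = p := by
  ext g
  rw [convPow_succ_apply, tsum_eq_single 1 fun k hk ↦ by simp [convPow_zero_apply, hk]]
  simp [convPow_zero_apply]

theorem tsum_convPow (hmass : ∑' g, p g = 1) (n : ℕ) : ∑' g, convPow p n g = 1 := by
  induction n with
  | zero => simp [convPow_zero_apply]
  | succ n ih =>
    calc ∑' g, convPow p (n + 1) g = ∑' k, convPow p n k * ∑' g, p (k⁻¹ * g) := by
          simp only [convPow_succ_apply, ← ENNReal.tsum_mul_left]
          exact ENNReal.tsum_comm
      _ = ∑' k, convPow p n k * 1 :=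
          tsum_congr fun k ↦ congrArg _ (((Equiv.mulLeft k⁻¹).tsum_eq p).trans hmass)
      _ = 1 := by simp only [mul_one, ih]

theorem eq_convPow {pn : ℕ → G → G → ℝ≥0∞}
    (hpn0 : ∀ g h, pn 0 g h = if g = h then 1 else 0)
    (hpnsucc : ∀ n g h, pn (n + 1) g h = ∑' k : G, pn n g k * p (k⁻¹ * h))
    (n : ℕ) (g h : G) : pn n g h = convPow p n (g⁻¹ * h) := by
  induction n generalizing h with
  | zero => simp [hpn0, convPow_zero_apply, inv_mul_eq_one]
  | succ n ih =>
    rw [hpnsucc, convPow_succ_apply, ← (Equiv.mulLeft g).tsum_eq]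
    simp [ih, mul_assoc]

theorem convPow_inv (hsymm : ∀ g, p g = p g⁻¹) (n : ℕ) (g : G) :
    convPow p n g⁻¹ = convPow p n g := by
  induction n generalizing g with
  | zero => simp [convPow_zero_apply]
  | succ n ih =>
    conv_rhs => rw [add_comm, convPow_add, convPow_one]
    rw [convPow_succ_apply, ← (Equiv.mulLeft g⁻¹).tsum_eq]
    refine tsum_congr fun k ↦ ?_
    rw [Equiv.coe_mulLeft, mul_comm, ← ih (k⁻¹ * g), hsymm k]
    congr 2 <;> group

theorem convPow_add_self_one (hsymm : ∀ g, p g = p g⁻¹) (n : ℕ) :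
    convPow p (n + n) 1 = ∑' k, convPow p n k ^ 2 := by
  simp [convPow_add, convPow_inv hsymm, sq]

theorem convPow_add_le (hsymm : ∀ g, p g = p g⁻¹) (m n : ℕ) (g : G) :
    convPow p (m + n) g ≤ convPow p (m + m) 1 + convPow p (n + n) 1 := by
  have hshift : ∑' k, convPow p n (k⁻¹ * g) ^ 2 = ∑' k, convPow p n k ^ 2 := by
    rw [← ((Equiv.inv G).trans (Equiv.mulLeft g)).tsum_eq]
    simp
  calc convPow p (m + n) g = ∑' k, convPow p m k * convPow p n (k⁻¹ * g) := convPow_add m n g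
    _ ≤ ∑' k, (convPow p m k ^ 2 + convPow p n (k⁻¹ * g) ^ 2) :=
        ENNReal.tsum_le_tsum fun k ↦ ENNReal.mul_le_sq_add_sq _ _
    _ = convPow p (m + m) 1 + convPow p (n + n) 1 := by
        rw [ENNReal.tsum_add, hshift, convPow_add_self_one hsymm, convPow_add_self_one hsymm]

-- Both halves of `n = ⌊n/2⌋ + ⌈n/2⌉`, doubled, lie in `{n - 1, n, n + 1}`.
theorem convPow_le_add_convPow_one (hsymm : ∀ g, p g = p g⁻¹) (n : ℕ) (g : G) :
    convPow p n g ≤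
      convPow p (n - 1) 1 + convPow p n 1 + (convPow p n 1 + convPow p (n + 1) 1) := by
  have h := convPow_add_le hsymm (n / 2) (n - n / 2) g
  rw [show n / 2 + (n - n / 2) = n by omega] at h
  refine h.trans (add_le_add ?_ ?_)
  · rcases (by omega : n / 2 + n / 2 = n - 1 ∨ n / 2 + n / 2 = n) with h | h <;> rw [h]
    exacts [le_self_add, le_add_self]
  · rcases (by omega : n - n / 2 + (n - n / 2) = n ∨ n - n / 2 + (n - n / 2) = n + 1)
      with h | h <;> rw [h]
    exacts [le_self_add, le_add_self]

theorem tendsto_tsum_convPow_cofinite [Countable G] (hsymm : ∀ g, p g = p g⁻¹)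
    (hmass : ∑' g, p g = 1) (htrans : ∑' n, convPow p n 1 ≠ ∞) :
    Tendsto (fun g ↦ ∑' n, convPow p n g) cofinite (𝓝 0) := by
  simpa using ENNReal.tendsto_tsum_of_dominated_convergence
    (ENNReal.tsum_pred_add_succ_ne_top htrans)
    (fun n ↦ ENNReal.tendsto_cofinite_zero_of_tsum_ne_top (by simp [tsum_convPow hmass n]))
    (fun g n ↦ convPow_le_add_convPow_one hsymm n g)

end RandomWalk

theorem green_function_vanishes_symmetric_general
    {G : Type*} [Group G] [Countable G] [DecidableEq G]
    (p : G → ℝ≥0∞) (hsum : ∑' g, p g = 1) (hsymm : ∀ g, p g = p g⁻¹)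
    (pn : ℕ → G → G → ℝ≥0∞)
    (hpn0 : ∀ g h, pn 0 g h = if g = h then 1 else 0)
    (hpnsucc : ∀ n g h, pn (n + 1) g h = ∑' k : G, pn n g k * p (k⁻¹ * h))
    (htrans : (∑' n : ℕ, pn n 1 1) < ⊤) :
    ∀ ε : ℝ≥0∞, 0 < ε → {g : G | ε < ∑' n : ℕ, pn n 1 g}.Finite := by
  intro ε hε
  have hpn (n : ℕ) (g : G) : pn n 1 g = RandomWalk.convPow p n g := by
    simpa using RandomWalk.eq_convPow hpn0 hpnsucc n 1 g
  simp only [hpn] at htrans ⊢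
  have hsmall := ENNReal.tendsto_nhds_zero.1
    (RandomWalk.tendsto_tsum_convPow_cofinite hsymm hsum htrans.ne) ε hε
  simpa only [eventually_cofinite, not_le] using hsmall

/-- For a symmetric transient random walk on a finitely generated group,
the Green function tends to 0 at infinity: `{g | G(g) > ε}` is finite for every `ε > 0`. -/
theorem green_function_vanishes_symmetric
    {G : Type*} [Group G] [Countable G] [DecidableEq G]
    (hfg : ∃ Sgen : Finset G, Subgroup.closure (Sgen : Set G) = ⊤)
    (p : G → ℝ≥0∞) (hsum : ∑' g, p g = 1) (hsymm : ∀ g, p g = p g⁻¹)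
    (pn : ℕ → G → G → ℝ≥0∞)
    (hpn0 : ∀ g h, pn 0 g h = if g = h then 1 else 0)
    (hpnsucc : ∀ n g h, pn (n + 1) g h = ∑' k : G, pn n g k * p (k⁻¹ * h))
    (htrans : (∑' n : ℕ, pn n 1 1) < ⊤) :
    ∀ ε : ℝ≥0∞, 0 < ε → {g : G | ε < ∑' n : ℕ, pn n 1 g}.Finite :=
  green_function_vanishes_symmetric_general p hsum hsymm pn hpn0 hpnsucc htrans
end
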